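/- Fix subsets Δ(P) ⊆ Δ(Q) ⊆ Δ with associated parabolic subsystems R_P ⊆ R_Q, half-sums ρ^P, ρ^Q of R_P⁺, R_Q⁺, and characters χ^P_w := ρ − 2ρ^P + w⁻¹ρ, χ^Q_w := ρ − 2ρ^Q + w⁻¹ρ. Let s ≥ 2 and let w_1, …, w_s ∈ W with w_k = u_k v_k where u_k ∈ W and v_k ∈ W_Q for each k. If the numerical conditions ((Σ_{k=1}^s χ^P_{w_k}) − χ^P_1)(x_i) = 0 hold for every α_i ∈ Δ\Δ(P), then ((Σ_{k=1}^s χ^Q_{u_k}) − χ^Q_1)(x_i) = 0 for every α_i ∈ Δ\Δ(Q). -/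

import Mathlib

open scoped Classical

/-- A finite reduced crystallographic root system in a real vector space `E`, together with
a fixed base of simple roots `α_1, …, α_n` (a basis of `E`), the corresponding simple
coroots (as linear functionals) and the simple reflections generating the Weyl group. -/
structure RootSystemWithBase (n : ℕ) (E : Type*) [AddCommGroup E] [Module ℝ E] where
  /-- The finite set of roots. -/
  R : Finset E
  /-- The simple roots `Δ = {α_1, …, α_n}`, a basis of `E`. -/
  base : Module.Basis (Fin n) ℝ E
  base_mem : ∀ i, base i ∈ R
  neg_mem : ∀ r ∈ R, -r ∈ R
  /-- Reducedness: the only multiples of a root that are roots are `±` itself. -/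
  reduced : ∀ r ∈ R, ∀ t : ℝ, t • r ∈ R → t = 1 ∨ t = -1
  /-- Every root is an integral combination of the simple roots, with all coefficients of
  the same sign. -/
  int_pos_or_neg : ∀ r ∈ R, ∃ c : Fin n → ℤ,
      (∀ i, base.repr r i = (c i : ℝ)) ∧ ((∀ i, 0 ≤ c i) ∨ (∀ i, c i ≤ 0))
  /-- The simple coroots `α_i^∨`, viewed as linear functionals on `E`. -/
  coroot : Fin n → Module.Dual ℝ E
  coroot_self : ∀ i, coroot i (base i) = 2
  /-- Crystallographic condition: `α_i^∨` takes integer values on roots. -/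
  crystallographic : ∀ i, ∀ r ∈ R, ∃ m : ℤ, coroot i r = (m : ℝ)
  /-- The simple reflections `s_{α_i}`. -/
  refl : Fin n → E ≃ₗ[ℝ] E
  refl_apply : ∀ i x, refl i x = x - coroot i x • base i
  refl_mem : ∀ i, ∀ r ∈ R, refl i r ∈ R

namespace RootSystemWithBase

variable {n : ℕ} {E : Type*} [AddCommGroup E] [Module ℝ E]

/-- A positive root: all coefficients on the base are nonnegative. -/
def IsPos (RS : RootSystemWithBase n E) (r : E) : Prop :=
  r ∈ RS.R ∧ ∀ i, 0 ≤ RS.base.repr r i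

/-- A negative root: all coefficients on the base are nonpositive. -/
def IsNeg (RS : RootSystemWithBase n E) (r : E) : Prop :=
  r ∈ RS.R ∧ ∀ i, RS.base.repr r i ≤ 0

/-- The Weyl group `W`, generated by all simple reflections. -/
def weyl (RS : RootSystemWithBase n E) : Subgroup (E ≃ₗ[ℝ] E) :=
  Subgroup.closure (Set.range RS.refl)

/-- The parabolic subgroup `W_Q`, generated by the simple reflections `s_α, α ∈ Δ(Q)`. -/
def weylSub (RS : RootSystemWithBase n E) (Q : Finset (Fin n)) : Subgroup (E ≃ₗ[ℝ] E) :=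
  Subgroup.closure (RS.refl '' ↑Q)

/-- The parabolic subsystem `R_Q = R ∩ span_ℤ Δ(Q)`. -/
def sub (RS : RootSystemWithBase n E) (Q : Finset (Fin n)) : Set E :=
  {r : E | r ∈ RS.R ∧ r ∈ Submodule.span ℤ (RS.base '' ↑Q)}

/-- The fundamental coweights `x_1, …, x_n`: the basis of `E^*` dual to the simple roots,
so that `α_i(x_j) = δ_{ij}`. -/
noncomputable def coweight (RS : RootSystemWithBase n E) (i : Fin n) : Module.Dual ℝ E :=
  RS.base.coord i

/-- The contragradient action of `w` on the dual space: `(w · f)(e) = f(w⁻¹ e)`. -/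
def cAct (w : E ≃ₗ[ℝ] E) (f : Module.Dual ℝ E) : Module.Dual ℝ E :=
  f ∘ₗ (w.symm : E →ₗ[ℝ] E)

/-- The set `R⁺` of positive roots. -/
noncomputable def posRoots (RS : RootSystemWithBase n E) : Finset E :=
  RS.R.filter fun r => ∀ i, 0 ≤ RS.base.repr r i

/-- `ρ`, the half sum of the positive roots. -/
noncomputable def rho (RS : RootSystemWithBase n E) : E :=
  (2⁻¹ : ℝ) • ∑ r ∈ RS.posRoots, r

/-- `ρ^Q`, the half sum of the roots in `R_Q⁺`. -/
noncomputable def rhoSub (RS : RootSystemWithBase n E) (Q : Finset (Fin n)) : E :=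
  (2⁻¹ : ℝ) • ∑ r ∈ RS.posRoots.filter
    (fun r => r ∈ Submodule.span ℤ (RS.base '' (↑Q : Set (Fin n)))), r

/-- Word length with respect to the simple reflections. -/
noncomputable def len (RS : RootSystemWithBase n E) (w : E ≃ₗ[ℝ] E) : ℕ :=
  sInf {m : ℕ | ∃ f : Fin m → Fin n, w = (List.ofFn fun j => RS.refl (f j)).prod}

/-- The character `χ^P_w = ρ − 2ρ^P + w⁻¹ρ`. -/
noncomputable def chi (RS : RootSystemWithBase n E) (P : Finset (Fin n))
    (w : E ≃ₗ[ℝ] E) : E :=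
  RS.rho - (2 : ℝ) • RS.rhoSub P + w.symm RS.rho

end RootSystemWithBase


/-!
For `α_i ∉ Δ(Q)` the coweight `x_i` kills `span Δ(Q)`, which contains `ρ^P` and `ρ^Q`, and it is
fixed by `W_Q`, since `s_{α_j}` only moves the `α_j`-coordinate. Hence
`χ^P_{u v}(x_i) = ρ(x_i) + (v⁻¹ u⁻¹ ρ)(x_i) = ρ(x_i) + (u⁻¹ ρ)(x_i) = χ^Q_u(x_i)` for `v ∈ W_Q`,
so the two numerical conditions agree term by term.
-/

theorem Module.Basis.coord_eq_zero_of_mem_span {ι R M : Type*} [Ring R] [AddCommGroup M]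
    [Module R M] (b : Module.Basis ι R M) {s : Set ι} {i : ι} (hi : i ∉ s) {m : M}
    (hm : m ∈ Submodule.span R (b '' s)) : b.coord i m = 0 := by
  rw [Module.Basis.coord_apply, ← Finsupp.notMem_support_iff]
  exact fun h => hi (b.mem_span_image.mp hm h)

namespace RootSystemWithBase

variable {n : ℕ} {E : Type*} [AddCommGroup E] [Module ℝ E] (RS : RootSystemWithBase n E)
  {P Q : Finset (Fin n)} {i : Fin n}

theorem rhoSub_mem_span (Q : Finset (Fin n)) :
    RS.rhoSub Q ∈ Submodule.span ℝ (RS.base '' (↑Q : Set (Fin n))) := by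
  refine Submodule.smul_mem _ _ (Submodule.sum_mem _ fun r hr => ?_)
  exact Submodule.span_le_restrictScalars ℤ ℝ _ (Finset.mem_filter.mp hr).2

theorem coweight_rhoSub_eq_zero (hi : i ∉ Q) : RS.coweight i (RS.rhoSub Q) = 0 :=
  RS.base.coord_eq_zero_of_mem_span (by exact_mod_cast hi) (RS.rhoSub_mem_span Q)

theorem coweight_chi (hi : i ∉ P) (w : E ≃ₗ[ℝ] E) :
    RS.coweight i (RS.chi P w) = RS.coweight i RS.rho + RS.coweight i (w.symm RS.rho) := by
  simp only [chi, map_add, map_sub, map_smul, RS.coweight_rhoSub_eq_zero hi, smul_zero, sub_zero]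

theorem coweight_refl_apply {j : Fin n} (hij : j ≠ i) (x : E) :
    RS.coweight i (RS.refl j x) = RS.coweight i x := by
  simp [coweight, RS.refl_apply, Module.Basis.coord_apply, hij]

theorem coweight_apply_of_mem_weylSub (hi : i ∉ Q) {g : E ≃ₗ[ℝ] E} (hg : g ∈ RS.weylSub Q)
    (x : E) : RS.coweight i (g x) = RS.coweight i x := by
  induction hg using Subgroup.closure_induction generalizing x with
  | mem _ hg =>
    obtain ⟨j, hj, rfl⟩ := hg
    exact RS.coweight_refl_apply (ne_of_mem_of_not_mem hj hi) x
  | one => rfl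
  | mul a b _ _ ha hb => exact (ha (b x)).trans (hb x)
  | inv a _ ha => exact (ha (a.symm x)).symm.trans (congrArg _ (a.apply_symm_apply x))

theorem coweight_symm_mul_apply (hi : i ∉ Q) (u : E ≃ₗ[ℝ] E) {v : E ≃ₗ[ℝ] E}
    (hv : v ∈ RS.weylSub Q) (x : E) :
    RS.coweight i ((u * v).symm x) = RS.coweight i (u.symm x) :=
  RS.coweight_apply_of_mem_weylSub hi ((RS.weylSub Q).inv_mem hv) (u.symm x)

end RootSystemWithBase

theorem chi_numerical_conditions_descend_general {n : ℕ} {E : Type*} [AddCommGroup E] [Module ℝ E]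
    (RS : RootSystemWithBase n E) (P Q : Finset (Fin n)) (hPQ : P ⊆ Q)
    (s : ℕ) (w u v : Fin s → (E ≃ₗ[ℝ] E))
    (hv : ∀ k, v k ∈ RS.weylSub Q)
    (hfact : ∀ k, w k = u k * v k)
    (hnum : ∀ i ∉ P,
      (∑ k, RS.coweight i (RS.chi P (w k))) - RS.coweight i (RS.chi P 1) = 0) :
    ∀ i ∉ Q,
      (∑ k, RS.coweight i (RS.chi Q (u k))) - RS.coweight i (RS.chi Q 1) = 0 := by
  intro i hiQ
  have hiP : i ∉ P := fun h => hiQ (hPQ h)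
  have hterm : ∀ k, RS.coweight i (RS.chi P (w k)) = RS.coweight i (RS.chi Q (u k)) := by
    intro k
    rw [RS.coweight_chi hiP, RS.coweight_chi hiQ, hfact k, RS.coweight_symm_mul_apply hiQ _ (hv k)]
  have hone : RS.coweight i (RS.chi P 1) = RS.coweight i (RS.chi Q 1) := by
    rw [RS.coweight_chi hiP, RS.coweight_chi hiQ]
  simpa only [hterm, hone] using hnum i hiP

/-- For `Δ(P) ⊆ Δ(Q) ⊆ Δ`, `s ≥ 2` and `w_k = u_k v_k` with `u_k ∈ W`,
`v_k ∈ W_Q`: if `((Σ_k χ^P_{w_k}) − χ^P_1)(x_i) = 0` for every `α_i ∈ Δ\Δ(P)`, then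
`((Σ_k χ^Q_{u_k}) − χ^Q_1)(x_i) = 0` for every `α_i ∈ Δ\Δ(Q)`. -/
theorem chi_numerical_conditions_descend {n : ℕ} {E : Type*} [AddCommGroup E] [Module ℝ E]
    (RS : RootSystemWithBase n E) (P Q : Finset (Fin n)) (hPQ : P ⊆ Q)
    (s : ℕ) (hs : 2 ≤ s) (w u v : Fin s → (E ≃ₗ[ℝ] E))
    (hw : ∀ k, w k ∈ RS.weyl) (hu : ∀ k, u k ∈ RS.weyl) (hv : ∀ k, v k ∈ RS.weylSub Q)
    (hfact : ∀ k, w k = u k * v k)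
    (hnum : ∀ i ∉ P,
      (∑ k, RS.coweight i (RS.chi P (w k))) - RS.coweight i (RS.chi P 1) = 0) :
    ∀ i ∉ Q,
      (∑ k, RS.coweight i (RS.chi Q (u k))) - RS.coweight i (RS.chi Q 1) = 0 :=
  chi_numerical_conditions_descend_general RS P Q hPQ s w u v hv hfact hnum
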